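/- Let g ≥ 2 and d be integers and let (g₁, g₂, k) be a stable vine curve of genus g. Then (g₁, g₂, k) is d-special if and only if (2g − 2)/gcd(d − g + 1, 2g − 2) divides w₁ = 2g₁ − 2 + k. -/

import Mathlib

/-- `(g₁, g₂, k)` encodes a stable vine curve of genus `g`: two smooth irreducible
components of genera `g₁, g₂` meeting in `k` nodes. -/
def StableVine (g g₁ g₂ k : ℤ) : Prop :=
  0 ≤ g₁ ∧ 0 ≤ g₂ ∧ 1 ≤ k ∧ g = g₁ + g₂ + k - 1 ∧ ((g₁ = 0 ∨ g₂ = 0) → 3 ≤ k)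

/-- The Basic Inequality for a component of `ω`-degree `w`, with `k` nodes, on a curve of
genus `g`, for total degree `d` and partial degree `e`. -/
def BasicIneq (g d k w e : ℤ) : Prop :=
  (d : ℚ) * w / (2 * g - 2) - k / 2 ≤ e ∧ (e : ℚ) ≤ (d : ℚ) * w / (2 * g - 2) + k / 2

/-- The strict version of the Basic Inequality. -/
def BasicIneqStrict (g d k w e : ℤ) : Prop :=
  (d : ℚ) * w / (2 * g - 2) - k / 2 < e ∧ (e : ℚ) < (d : ℚ) * w / (2 * g - 2) + k / 2

/-- `(e₁, e₂)` is a balanced multidegree of total degree `d` on the vine curve `(g₁, g₂, k)`. -/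
def IsBalanced (g d g₁ g₂ k e₁ e₂ : ℤ) : Prop :=
  e₁ + e₂ = d ∧ BasicIneq g d k (2 * g₁ - 2 + k) e₁ ∧ BasicIneq g d k (2 * g₂ - 2 + k) e₂

/-- `(e₁, e₂)` is a stably balanced multidegree of total degree `d` on `(g₁, g₂, k)`. -/
def IsStablyBalanced (g d g₁ g₂ k e₁ e₂ : ℤ) : Prop :=
  e₁ + e₂ = d ∧ BasicIneqStrict g d k (2 * g₁ - 2 + k) e₁ ∧
    BasicIneqStrict g d k (2 * g₂ - 2 + k) e₂

/-- The vine curve `(g₁, g₂, k)` is `d`-special: it admits a balanced multidegree of total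
degree `d` which is not stably balanced. -/
def DSpecial (g d g₁ g₂ k : ℤ) : Prop :=
  ∃ e₁ e₂ : ℤ, IsBalanced g d g₁ g₂ k e₁ e₂ ∧ ¬ IsStablyBalanced g d g₁ g₂ k e₁ e₂

/-
A multidegree `(e₁, d - e₁)` is balanced iff `e₁` lies in the interval of radius `k/2` about
`d w₁/(2g-2)`; the condition on `e₂` is the same one, since `w₂ = (2g-2) - w₁`. So a balanced but
not stably balanced multidegree exists iff an endpoint of that interval is an integer, i.e. iff
`2(2g-2) ∣ 2 d w₁ + k(2g-2)`. Using `g = g₁ + g₂ + k - 1` this number equals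
`2 (w₁ (d-g+1) + (g₁+k-1)(2g-2))`, so the condition becomes `2g-2 ∣ w₁ (d-g+1)`, that is,
`(2g-2)/gcd(d-g+1, 2g-2) ∣ w₁`.
-/

lemma Int.div_gcd_dvd_iff_dvd_mul {a n w : ℤ} (hn : n ≠ 0) :
    n / (Int.gcd a n : ℤ) ∣ w ↔ n ∣ a * w := by
  rw [Int.div_dvd_iff_dvd_mul (Int.gcd_dvd_right a n) (by simpa using Int.gcd_ne_zero_right hn),
    Int.gcd_comm, Int.coe_gcd, _root_.dvd_gcd_mul_iff_dvd_mul]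

lemma Int.exists_cast_eq_div_iff {a b : ℤ} (hb : b ≠ 0) :
    (∃ e : ℤ, (e : ℚ) = a / b) ↔ b ∣ a := by
  constructor
  · rintro ⟨e, he⟩
    rw [eq_div_iff (by exact_mod_cast hb)] at he
    exact ⟨e, by rw [mul_comm]; exact_mod_cast he.symm⟩
  · rintro ⟨c, rfl⟩
    exact ⟨c, by push_cast; field_simp⟩

section BasicInequality

variable {g d k w e : ℤ}

lemma basicIneq_iff_mem_Icc : BasicIneq g d k w e ↔
    (e : ℚ) ∈ Set.Icc ((d : ℚ) * w / (2 * g - 2) - k / 2) ((d : ℚ) * w / (2 * g - 2) + k / 2) :=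
  Iff.rfl

lemma basicIneqStrict_iff_mem_Ioo : BasicIneqStrict g d k w e ↔
    (e : ℚ) ∈ Set.Ioo ((d : ℚ) * w / (2 * g - 2) - k / 2) ((d : ℚ) * w / (2 * g - 2) + k / 2) :=
  Iff.rfl

lemma two_mul_sub_two_ne_zero (hg : g ≠ 1) : (2 * g - 2 : ℚ) ≠ 0 := by
  intro h
  exact hg (by exact_mod_cast (by linarith : (g : ℚ) = 1))

lemma mul_sub_div_eq_sub_mul_div (hg : g ≠ 1) :
    (d : ℚ) * ((2 * g - 2 - w : ℤ) : ℚ) / (2 * g - 2) = d - d * w / (2 * g - 2) := by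
  push_cast
  rw [mul_sub, sub_div, mul_div_cancel_right₀ _ (two_mul_sub_two_ne_zero hg)]

lemma basicIneq_sub_sub_iff (hg : g ≠ 1) :
    BasicIneq g d k (2 * g - 2 - w) (d - e) ↔ BasicIneq g d k w e := by
  unfold BasicIneq
  rw [mul_sub_div_eq_sub_mul_div hg]
  push_cast
  constructor <;> rintro ⟨h₁, h₂⟩ <;> constructor <;> linarith

lemma basicIneqStrict_sub_sub_iff (hg : g ≠ 1) :
    BasicIneqStrict g d k (2 * g - 2 - w) (d - e) ↔ BasicIneqStrict g d k w e := by
  unfold BasicIneqStrict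
  rw [mul_sub_div_eq_sub_mul_div hg]
  push_cast
  constructor <;> rintro ⟨h₁, h₂⟩ <;> constructor <;> linarith

lemma basicIneq_and_not_strict_iff (hk : 0 ≤ k) :
    BasicIneq g d k w e ∧ ¬ BasicIneqStrict g d k w e ↔
      (e : ℚ) = d * w / (2 * g - 2) - k / 2 ∨ (e : ℚ) = d * w / (2 * g - 2) + k / 2 := by
  have hk' : (0 : ℚ) ≤ k := by exact_mod_cast hk
  rw [basicIneq_iff_mem_Icc, basicIneqStrict_iff_mem_Ioo, ← Set.mem_sdiff,
    Set.Icc_sdiff_Ioo_same (by linarith), Set.mem_insert_iff, Set.mem_singleton_iff]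

end BasicInequality

section VineCurve

variable {g d g₁ g₂ k e₁ e₂ : ℤ}

lemma isBalanced_iff (hg : g ≠ 1) (hgenus : g = g₁ + g₂ + k - 1) :
    IsBalanced g d g₁ g₂ k e₁ e₂ ↔ e₂ = d - e₁ ∧ BasicIneq g d k (2 * g₁ - 2 + k) e₁ := by
  have hw : 2 * g₂ - 2 + k = 2 * g - 2 - (2 * g₁ - 2 + k) := by omega
  unfold IsBalanced
  rw [hw]
  constructor
  · rintro ⟨hsum, h₁, -⟩
    exact ⟨by omega, h₁⟩
  · rintro ⟨rfl, h₁⟩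
    exact ⟨by ring, h₁, (basicIneq_sub_sub_iff hg).2 h₁⟩

lemma isStablyBalanced_iff (hg : g ≠ 1) (hgenus : g = g₁ + g₂ + k - 1) :
    IsStablyBalanced g d g₁ g₂ k e₁ e₂ ↔
      e₂ = d - e₁ ∧ BasicIneqStrict g d k (2 * g₁ - 2 + k) e₁ := by
  have hw : 2 * g₂ - 2 + k = 2 * g - 2 - (2 * g₁ - 2 + k) := by omega
  unfold IsStablyBalanced
  rw [hw]
  constructor
  · rintro ⟨hsum, h₁, -⟩
    exact ⟨by omega, h₁⟩
  · rintro ⟨rfl, h₁⟩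
    exact ⟨by ring, h₁, (basicIneqStrict_sub_sub_iff hg).2 h₁⟩

lemma dSpecial_iff_exists (hg : g ≠ 1) (hgenus : g = g₁ + g₂ + k - 1) :
    DSpecial g d g₁ g₂ k ↔
      ∃ e : ℤ, BasicIneq g d k (2 * g₁ - 2 + k) e ∧ ¬ BasicIneqStrict g d k (2 * g₁ - 2 + k) e := by
  simp only [DSpecial, isBalanced_iff hg hgenus, isStablyBalanced_iff hg hgenus]
  constructor
  · rintro ⟨e₁, e₂, ⟨he₂, h⟩, hns⟩
    exact ⟨e₁, h, fun hs => hns ⟨he₂, hs⟩⟩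
  · rintro ⟨e, h, hns⟩
    exact ⟨e, d - e, ⟨rfl, h⟩, fun hs => hns hs.2⟩

lemma dSpecial_iff_dvd (hg : g ≠ 1) (hk : 0 ≤ k) (hgenus : g = g₁ + g₂ + k - 1) :
    DSpecial g d g₁ g₂ k ↔
      2 * (2 * g - 2) ∣ 2 * d * (2 * g₁ - 2 + k) + k * (2 * g - 2) := by
  set w := 2 * g₁ - 2 + k
  have hn := two_mul_sub_two_ne_zero hg
  have hupper : (d : ℚ) * w / (2 * g - 2) + k / 2 =
      ((2 * d * w + k * (2 * g - 2) : ℤ) : ℚ) / ((2 * (2 * g - 2) : ℤ) : ℚ) := by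
    push_cast
    rw [div_add_div _ _ hn two_ne_zero,
      div_eq_div_iff (mul_ne_zero hn two_ne_zero) (mul_ne_zero two_ne_zero hn)]
    ring
  rw [dSpecial_iff_exists hg hgenus, ← Int.exists_cast_eq_div_iff (by omega), ← hupper]
  simp only [basicIneq_and_not_strict_iff hk]
  constructor
  · rintro ⟨e, he | he⟩
    · exact ⟨e + k, by push_cast; linarith⟩
    · exact ⟨e, he⟩
  · rintro ⟨e, he⟩
    exact ⟨e, Or.inr he⟩

end VineCurve

/-- Remark 2.7 (vine-curve form): a stable vine curve is `d`-special iff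
`(2g-2)/gcd(d-g+1, 2g-2)` divides `w₁ = 2g₁ - 2 + k`. -/
theorem stmt_5 (g d : ℤ) (hg : 2 ≤ g) (g₁ g₂ k : ℤ) (hvine : StableVine g g₁ g₂ k) :
    DSpecial g d g₁ g₂ k ↔
      (2 * g - 2) / (Int.gcd (d - g + 1) (2 * g - 2) : ℤ) ∣ 2 * g₁ - 2 + k := by
  obtain ⟨-, -, hk, hgenus, -⟩ := hvine
  have hsplit : 2 * d * (2 * g₁ - 2 + k) + k * (2 * g - 2) =
      2 * ((d - g + 1) * (2 * g₁ - 2 + k) + (g₁ + k - 1) * (2 * g - 2)) := by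
    rw [hgenus]; ring
  rw [dSpecial_iff_dvd (by omega) (by omega) hgenus, hsplit, mul_dvd_mul_iff_left two_ne_zero,
    dvd_add_left (dvd_mul_left _ _), Int.div_gcd_dvd_iff_dvd_mul (by omega)]
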